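/- If f : ℤ → ℂ satisfies ∑_{k∈ℤ} |f_k|² < ∞ and a_{k-1} f_{k-1} + b_k f_k + a_k f_{k+1} = 0 for all k ∈ ℤ, then f = 0. In other words, 0 is not an eigenvalue of the doubly infinite Jacobi operator with coefficients a_k, b_k on ℓ²(ℤ). -/

import Mathlib

/-!
Put `z_k = k + ε + 1/2 + iρ`, so that `a_k = |z_k|` and
`b_k = conj z_{k-1} + z_k = z_{k-1} + conj z_k`. The Jacobi operator then factors through the
first order operators `w_k = z_k f_k + a_k f_{k+1}` and `v_k = conj z_k f_k + a_k f_{k+1}`: on a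
solution `a_k w_{k+1} = -conj z_k w_k` and `a_k v_{k+1} = -z_k v_k`, so `|w|` and `|v|` are
constant. As `w - v = 2iρ f → 0`, the product `p = w conj v` tends to `|v|²`; but
`z_k p_{k+1} = conj z_k p_k` rotates `p` by angles `≈ 2ρ/k` whose sum diverges, so `|v| = 0`,
then `|w| = 0`, and `f = (w - v) / 2iρ = 0`.
-/

open Complex

noncomputable section

/-- `a_k = |k + ε + 1/2 + iρ|`. -/
def coefA (ρ ε : ℝ) (k : ℤ) : ℝ := ‖(k : ℂ) + (ε : ℂ) + 1/2 + I * (ρ : ℂ)‖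

/-- `b_k = 2(k + ε)`. -/
def coefB (ρ ε : ℝ) (k : ℤ) : ℝ := 2 * ((k : ℝ) + ε)

open ComplexConjugate Filter Topology

theorem summable_of_le_sub_succ {u d : ℕ → ℝ} (hd : ∀ n, 0 ≤ d n) (hu : BddBelow (Set.range u))
    (h : ∀ n, d n ≤ u n - u (n + 1)) : Summable d := by
  obtain ⟨B, hB⟩ := hu
  refine summable_of_sum_range_le (c := u 0 - B) hd fun n => ?_
  calc ∑ i ∈ Finset.range n, d i ≤ ∑ i ∈ Finset.range n, (u i - u (i + 1)) :=
        Finset.sum_le_sum fun i _ => h i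
    _ = u 0 - u n := Finset.sum_range_sub' u n
    _ ≤ u 0 - B := by linarith [hB ⟨n, rfl⟩]

theorem nonpos_of_tendsto_mul_sub_succ {u : ℕ → ℝ} {L : ℝ} (hu : BddBelow (Set.range u))
    (h : Tendsto (fun n : ℕ => n * (u n - u (n + 1))) atTop (𝓝 L)) : L ≤ 0 := by
  by_contra! hL
  obtain ⟨K, hK⟩ := eventually_atTop.mp
    ((h.eventually (lt_mem_nhds (half_lt_self hL))).and (eventually_ge_atTop 1))
  have hdrop : ∀ n, L / 2 * ((n + K : ℕ) : ℝ)⁻¹ ≤ u (n + K) - u (n + 1 + K) := by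
    intro n
    rw [Nat.add_right_comm]
    obtain ⟨hlt, hpos⟩ := hK (n + K) (Nat.le_add_left K n)
    have hpos' : (0 : ℝ) < (n + K : ℕ) := by exact_mod_cast hpos
    rw [← div_eq_mul_inv, div_le_iff₀ hpos', mul_comm]
    exact hlt.le
  have hsum : Summable fun n : ℕ => L / 2 * ((n + K : ℕ) : ℝ)⁻¹ :=
    summable_of_le_sub_succ (u := fun n => u (n + K)) (fun n => by positivity)
      (hu.mono (Set.range_comp_subset_range (· + K) u)) hdrop
  rw [summable_mul_left_iff (by positivity)] at hsum
  exact Real.not_summable_natCast_inv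
    ((summable_nat_add_iff (f := fun n : ℕ => (n : ℝ)⁻¹) K).mp hsum)

theorem eq_zero_of_tendsto_of_mul_succ_eq_conj_mul {z p : ℕ → ℂ} {ρ : ℝ} {c : ℂ} (hρ : 0 < ρ)
    (him : ∀ n, (z n).im = ρ) (hz : Tendsto (fun n : ℕ => (n : ℂ) / z n) atTop (𝓝 1))
    (hrec : ∀ n, z n * p (n + 1) = conj (z n) * p n) (hp : Tendsto p atTop (𝓝 c)) : c = 0 := by
  have hz0 : ∀ n, z n ≠ 0 := fun n h0 => hρ.ne (by simpa [h0] using him n)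
  have hstep : ∀ n, p n - p (n + 1) = 2 * ρ * I * p n / z n := by
    intro n
    have hsub := Complex.sub_conj (z n)
    rw [him n] at hsub
    push_cast at hsub
    rw [eq_div_iff (hz0 n)]
    linear_combination -hrec n + p n * hsub
  set u : ℕ → ℝ := fun n => (conj c * p n).im
  have hu : BddBelow (Set.range u) :=
    ((continuous_im.tendsto _).comp (hp.const_mul (conj c))).bddBelow_range
  have hdrop : ∀ n : ℕ, n * (u n - u (n + 1)) = (conj c * (2 * ρ * I) * p n * (n / z n)).im := by
    intro n
    rw [← Complex.sub_im, ← mul_sub, hstep, ← Complex.im_ofReal_mul, ofReal_natCast]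
    ring_nf
  have hval : (conj c * (2 * ρ * I) * c * 1).im = 2 * ρ * ‖c‖ ^ 2 := by
    rw [mul_one, mul_right_comm, conj_mul', ← ofReal_pow, im_ofReal_mul, mul_comm]
    norm_num
  have hlim : Tendsto (fun n : ℕ => n * (u n - u (n + 1))) atTop (𝓝 (2 * ρ * ‖c‖ ^ 2)) := by
    simp only [hdrop, ← hval]
    exact (continuous_im.tendsto _).comp ((hp.const_mul _).mul hz)
  have hc : ‖c‖ ^ 2 ≤ 0 := by nlinarith [nonpos_of_tendsto_mul_sub_succ hu hlim]
  simpa using hc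

def SolvesJacobi (z f : ℤ → ℂ) : Prop :=
  ∀ k, ‖z (k - 1)‖ * f (k - 1) + (conj (z (k - 1)) + z k) * f k + ‖z k‖ * f (k + 1) = 0

def jacobiFactor (z f : ℤ → ℂ) (k : ℤ) : ℂ := z k * f k + ‖z k‖ * f (k + 1)

def jacobiPairing (z f : ℤ → ℂ) (k : ℤ) : ℂ :=
  jacobiFactor z f k * conj (jacobiFactor (fun k => conj (z k)) f k)

namespace SolvesJacobi

variable {z f : ℤ → ℂ}

theorem norm_mul_jacobiFactor_succ (h : SolvesJacobi z f) (k : ℤ) :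
    ‖z k‖ * jacobiFactor z f (k + 1) = -(conj (z k) * jacobiFactor z f k) := by
  have hk := h (k + 1)
  rw [add_sub_cancel_right] at hk
  unfold jacobiFactor
  linear_combination (‖z k‖ : ℂ) * hk + f k * mul_conj' (z k)

theorem comp_conj (h : SolvesJacobi z f) (him : ∀ k, (z (k + 1)).im = (z k).im) :
    SolvesJacobi (fun k => conj (z k)) f := by
  intro k
  have hb : z (k - 1) + conj (z k) = conj (z (k - 1)) + z k := by
    have hk := sub_conj (z k)
    rw [← sub_add_cancel k 1, him (k - 1), sub_add_cancel] at hk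
    linear_combination sub_conj (z (k - 1)) - hk
  simpa only [norm_conj, conj_conj, hb] using h k

theorem norm_jacobiFactor_eq (h : SolvesJacobi z f) (hz : ∀ k, z k ≠ 0) (k : ℤ) :
    ‖jacobiFactor z f k‖ = ‖jacobiFactor z f 0‖ := by
  have hper : Function.Periodic (fun k => ‖jacobiFactor z f k‖) 1 := fun k => by
    have := congrArg norm (h.norm_mul_jacobiFactor_succ k)
    rw [norm_mul, norm_neg, norm_mul, norm_conj, norm_real, norm_norm] at this
    exact mul_left_cancel₀ (norm_ne_zero_iff.mpr (hz k)) this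
  simpa using hper.int_mul_eq k

theorem mul_jacobiPairing_succ (h : SolvesJacobi z f)
    (him : ∀ k, (z (k + 1)).im = (z k).im) (hz : ∀ k, z k ≠ 0) (k : ℤ) :
    z k * jacobiPairing z f (k + 1) = conj (z k) * jacobiPairing z f k := by
  have hw := h.norm_mul_jacobiFactor_succ k
  have hv := congrArg (starRingEnd ℂ) ((h.comp_conj him).norm_mul_jacobiFactor_succ k)
  simp only [map_mul, map_neg, conj_ofReal, norm_conj, conj_conj] at hv
  refine mul_left_cancel₀ ((map_ne_zero (starRingEnd ℂ)).mpr (hz k)) ?_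
  unfold jacobiPairing
  set v := jacobiFactor (fun k => conj (z k)) f
  linear_combination (‖z k‖ * conj (v (k + 1))) * hw - conj (z k) * jacobiFactor z f k * hv
    + jacobiFactor z f (k + 1) * conj (v (k + 1)) * conj_mul' (z k)

end SolvesJacobi

theorem jacobiFactor_sub_jacobiFactor_conj (z f : ℤ → ℂ) (k : ℤ) :
    jacobiFactor z f k - jacobiFactor (fun k => conj (z k)) f k = 2 * (z k).im * I * f k := by
  have hsub := sub_conj (z k)
  push_cast at hsub
  simp only [jacobiFactor, norm_conj]
  linear_combination f k * hsub

theorem tendsto_mul_conj_of_tendsto_sub {α : Type*} {l : Filter α} {w v : α → ℂ} {B : ℝ}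
    (hv : ∀ a, ‖v a‖ = B) (h : Tendsto (fun a => w a - v a) l (𝓝 0)) :
    Tendsto (fun a => w a * conj (v a)) l (𝓝 (B ^ 2 : ℂ)) := by
  have hsplit : ∀ a, w a * conj (v a) = (w a - v a) * conj (v a) + (B ^ 2 : ℂ) := fun a => by
    rw [← hv a, ← mul_conj' (v a)]
    ring
  have hsmall : Tendsto (fun a => (w a - v a) * conj (v a)) l (𝓝 0) := by
    rw [tendsto_zero_iff_norm_tendsto_zero]
    simpa [hv] using h.norm.mul_const B
  simpa only [hsplit, zero_add] using hsmall.add_const (B ^ 2 : ℂ)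

theorem SolvesJacobi.eq_zero {z f : ℤ → ℂ} {ρ : ℝ} (h : SolvesJacobi z f) (hρ : 0 < ρ)
    (him : ∀ k, (z k).im = ρ) (hz : Tendsto (fun n : ℕ => (n : ℂ) / z n) atTop (𝓝 1))
    (hf : Tendsto (fun n : ℕ => f n) atTop (𝓝 0)) : f = 0 := by
  have hz0 : ∀ k, z k ≠ 0 := fun k h0 => hρ.ne (by simpa [h0] using him k)
  have him' : ∀ k, (z (k + 1)).im = (z k).im := fun k => by rw [him, him]
  set w := jacobiFactor z f
  set v := jacobiFactor (fun k => conj (z k)) f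
  have hwv : ∀ k, w k - v k = 2 * ρ * I * f k := fun k => by
    rw [jacobiFactor_sub_jacobiFactor_conj, him]
  have hwv_lim : Tendsto (fun n : ℕ => w n - v n) atTop (𝓝 0) := by
    simpa [hwv] using hf.const_mul (2 * ρ * I)
  have hnorm_w : ∀ k, ‖w k‖ = ‖w 0‖ := h.norm_jacobiFactor_eq hz0
  have hnorm_v : ∀ k, ‖v k‖ = ‖v 0‖ :=
    (h.comp_conj him').norm_jacobiFactor_eq (fun k => (map_ne_zero _).mpr (hz0 k))
  have hv : ∀ k, v k = 0 := by
    have hp := tendsto_mul_conj_of_tendsto_sub (fun n : ℕ => hnorm_v n) hwv_lim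
    have hv0 := eq_zero_of_tendsto_of_mul_succ_eq_conj_mul hρ (fun n => him n) hz
      (fun n => by exact_mod_cast h.mul_jacobiPairing_succ him' hz0 n) hp
    intro k
    rw [← norm_eq_zero, hnorm_v k]
    exact_mod_cast pow_eq_zero_iff two_ne_zero |>.mp hv0
  have hw : ∀ k, w k = 0 := by
    have hlim : Tendsto (fun _ : ℕ => ‖w 0‖) atTop (𝓝 0) := by
      simpa [hv, hnorm_w] using hwv_lim.norm
    intro k
    rw [← norm_eq_zero, hnorm_w k]
    exact tendsto_nhds_unique tendsto_const_nhds hlim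
  funext k
  simpa [hw, hv, hρ.ne'] using (hwv k).symm

def coefZ (ρ ε : ℝ) (k : ℤ) : ℂ := (k : ℂ) + (ε : ℂ) + 1/2 + I * (ρ : ℂ)

theorem coefZ_im (ρ ε : ℝ) (k : ℤ) : (coefZ ρ ε k).im = ρ := by
  simp [coefZ]

theorem coefB_eq_conj_add (ρ ε : ℝ) (k : ℤ) :
    (coefB ρ ε k : ℂ) = conj (coefZ ρ ε (k - 1)) + coefZ ρ ε k := by
  apply Complex.ext <;> simp [coefZ, coefB]
  ring

theorem tendsto_natCast_div_coefZ (ρ ε : ℝ) :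
    Tendsto (fun n : ℕ => (n : ℂ) / coefZ ρ ε n) atTop (𝓝 1) := by
  simpa [coefZ, add_assoc] using tendsto_natCast_div_add_atTop ((ε : ℂ) + 1/2 + I * ρ)

theorem tendsto_zero_of_summable_norm_sq {E : Type*} [SeminormedAddCommGroup E] {f : ℤ → E}
    (hf : Summable fun k => ‖f k‖ ^ 2) :
    Tendsto (fun n : ℕ => f n) atTop (𝓝 0) := by
  have hsq := (hf.comp_injective Nat.cast_injective).tendsto_atTop_zero
  rw [tendsto_zero_iff_norm_tendsto_zero]
  simpa [Function.comp_def, Real.sqrt_sq (norm_nonneg _)] using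
    (Real.continuous_sqrt.tendsto 0).comp hsq

theorem jacobi_operator_kernel_trivial_general (ρ ε : ℝ) (hρ : 0 < ρ)
    (f : ℤ → ℂ) (hf : Summable (fun k : ℤ => ‖f k‖ ^ 2))
    (hrec : ∀ k : ℤ, (coefA ρ ε (k - 1) : ℂ) * f (k - 1) + (coefB ρ ε k : ℂ) * f k +
      (coefA ρ ε k : ℂ) * f (k + 1) = 0) :
    f = 0 := by
  have hsol : SolvesJacobi (coefZ ρ ε) f := fun k => by
    rw [← coefB_eq_conj_add]
    exact hrec k
  exact hsol.eq_zero hρ (coefZ_im ρ ε) (tendsto_natCast_div_coefZ ρ ε)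
    (tendsto_zero_of_summable_norm_sq hf)

/-- a square-summable solution of `a_{k-1}f_{k-1} + b_k f_k + a_k f_{k+1} = 0`
vanishes identically; i.e. `0` is not an eigenvalue of the doubly infinite Jacobi operator. -/
theorem jacobi_operator_kernel_trivial (ρ ε : ℝ) (hρ : 0 < ρ) (hε : ε ∈ Set.Ico (0 : ℝ) 1)
    (f : ℤ → ℂ) (hf : Summable (fun k : ℤ => ‖f k‖ ^ 2))
    (hrec : ∀ k : ℤ, (coefA ρ ε (k - 1) : ℂ) * f (k - 1) + (coefB ρ ε k : ℂ) * f k +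
      (coefA ρ ε k : ℂ) * f (k + 1) = 0) :
    f = 0 :=
  jacobi_operator_kernel_trivial_general ρ ε hρ f hf hrec
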